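/- arXiv:2605.15765 — 3 statements merged into one kernel-verified Lean document; each statement's English description precedes it below -/
import Mathlib

section
/- Let L > 0 and define c(u) = √(u² + (L/3)²) for u ∈ ℝ. If 0 < y < (√5/6)·L, then there exists a unique y' > y satisfying y' − y + c(y) + c(y') = L, and this y' satisfies y' < (√5/6)·L. In particular, the sequence (y_i) defined recursively by y_{i+1} − y_i + c(y_i) + c(y_{i+1}) = L, starting from any y₀ ∈ (0, (√5/6)·L), is strictly increasing and bounded above by (√5/6)·L. -/
lemma sqrtlip (k a b : ℝ) (hk : 0 < k) (hab : a < b) :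
    Real.sqrt (b ^ 2 + k) < Real.sqrt (a ^ 2 + k) + (b - a) := by
  have ha : a < Real.sqrt (a ^ 2 + k) := by
    have h2 : Real.sqrt (a ^ 2) < Real.sqrt (a ^ 2 + k) :=
      Real.sqrt_lt_sqrt (sq_nonneg a) (by linarith)
    have h1 : Real.sqrt (a ^ 2) = |a| := Real.sqrt_sq_eq_abs a
    have := le_abs_self a
    linarith
  have hR : 0 < Real.sqrt (a ^ 2 + k) + (b - a) := by
    have := Real.sqrt_nonneg (a ^ 2 + k); linarith
  have hsq : Real.sqrt (a ^ 2 + k) ^ 2 = a ^ 2 + k :=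
    Real.sq_sqrt (by positivity)
  refine (Real.sqrt_lt' hR).2 ?_
  nlinarith [ha, hab]

lemma Fmono (k : ℝ) (hk : 0 < k) : StrictMono (fun u : ℝ => u + Real.sqrt (u ^ 2 + k)) := by
  intro a b hab
  have h := sqrtlip k (-b) (-a) hk (by linarith)
  simp only [neg_sq] at h
  dsimp
  linarith

/-- With `c(u) = √(u² + (L/3)²)`, for every `y ∈ (0, (√5/6)·L)` there is a
unique `y' > y` with `y' − y + c(y) + c(y') = L`, and this `y'` satisfies
`y' < (√5/6)·L`. In particular any sequence satisfying the recursion, starting in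
`(0, (√5/6)·L)`, is strictly increasing and bounded above by `(√5/6)·L`. -/
theorem stmt_3 (L : ℝ) (hL : 0 < L) :
    (∀ y : ℝ, 0 < y → y < (Real.sqrt 5 / 6) * L →
      (∃! y' : ℝ, y < y' ∧
        y' - y + Real.sqrt (y ^ 2 + (L / 3) ^ 2) + Real.sqrt (y' ^ 2 + (L / 3) ^ 2) = L) ∧
      (∀ y' : ℝ, y < y' →
        y' - y + Real.sqrt (y ^ 2 + (L / 3) ^ 2) + Real.sqrt (y' ^ 2 + (L / 3) ^ 2) = L →
        y' < (Real.sqrt 5 / 6) * L)) ∧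
    (∀ y : ℕ → ℝ, 0 < y 0 → y 0 < (Real.sqrt 5 / 6) * L →
      (∀ i : ℕ, y (i + 1) - y i + Real.sqrt ((y i) ^ 2 + (L / 3) ^ 2)
          + Real.sqrt ((y (i + 1)) ^ 2 + (L / 3) ^ 2) = L) →
      StrictMono y ∧ ∀ i : ℕ, y i < (Real.sqrt 5 / 6) * L) := by
  set k : ℝ := (L / 3) ^ 2 with hkdef
  set m : ℝ := (Real.sqrt 5 / 6) * L with hmdef
  have hk : 0 < k := by positivity
  have hm : 0 < m := by
    have : 0 < Real.sqrt 5 := Real.sqrt_pos.2 (by norm_num)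
    positivity
  have hm2 : m ^ 2 = 5 / 36 * L ^ 2 := by
    have : Real.sqrt 5 ^ 2 = 5 := Real.sq_sqrt (by norm_num)
    rw [hmdef]; ring_nf; nlinarith [this]
  have hcm : Real.sqrt (m ^ 2 + k) = L / 2 := by
    have : m ^ 2 + k = (L / 2) ^ 2 := by rw [hm2, hkdef]; ring
    rw [this, Real.sqrt_sq (by linarith)]
  -- key claim for a single y
  have key : ∀ y : ℝ, 0 < y → y < m →
      (∃! y' : ℝ, y < y' ∧
        y' - y + Real.sqrt (y ^ 2 + k) + Real.sqrt (y' ^ 2 + k) = L) ∧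
      (∀ y' : ℝ, y < y' →
        y' - y + Real.sqrt (y ^ 2 + k) + Real.sqrt (y' ^ 2 + k) = L →
        y' < m) := by
    intro y hy0 hym
    have hcy : Real.sqrt (y ^ 2 + k) < L / 2 := by
      have h1 : y ^ 2 < m ^ 2 := by nlinarith
      calc Real.sqrt (y ^ 2 + k) < Real.sqrt (m ^ 2 + k) :=
            Real.sqrt_lt_sqrt (by positivity) (by linarith)
        _ = L / 2 := hcm
    -- the function f
    set f : ℝ → ℝ := fun u => u - y + Real.sqrt (y ^ 2 + k) + Real.sqrt (u ^ 2 + k) with hfdef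
    have hfmono : StrictMono f := by
      intro a b hab
      have := Fmono k hk hab
      simp only [hfdef]
      dsimp at this ⊢
      linarith
    have hfy : f y < L := by
      simp only [hfdef]; linarith
    have hfm : L < f m := by
      have := sqrtlip k y m hk hym
      simp only [hfdef]; rw [hcm]; linarith [hcm ▸ this]
    have hcont : ContinuousOn f (Set.Icc y m) := by
      apply Continuous.continuousOn; fun_prop
    obtain ⟨y', hy'mem, hfy'⟩ :=
      intermediate_value_Icc (le_of_lt hym) hcont ⟨le_of_lt hfy, le_of_lt hfm⟩
    have hyy' : y < y' := by
      rcases lt_or_eq_of_le hy'mem.1 with h | h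
      · exact h
      · exfalso; rw [← h] at hfy'; linarith
    have hy'm : y' < m := by
      rcases lt_or_eq_of_le hy'mem.2 with h | h
      · exact h
      · exfalso; rw [h] at hfy'; linarith
    have hbound : ∀ z : ℝ, y < z →
        z - y + Real.sqrt (y ^ 2 + k) + Real.sqrt (z ^ 2 + k) = L → z < m := by
      intro z hyz hz
      by_contra hzm
      push_neg at hzm
      rcases lt_or_eq_of_le hzm with h | h
      · have := hfmono h
        simp only [hfdef] at this hfm
        linarith [hz]
      · rw [h] at hfm
        simp only [hfdef] at hfm; linarith
    refine ⟨⟨y', ⟨hyy', hfy'⟩, ?_⟩, hbound⟩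
    rintro z ⟨hyz, hz⟩
    have : f z = f y' := by simp only [hfdef] at hfy' ⊢; rw [hz, hfy']
    exact hfmono.injective this
  constructor
  · intro y hy0 hym
    exact key y hy0 hym
  · intro y h0 h1 hrec
    have step : ∀ i, 0 < y i ∧ y i < m → (y i < y (i + 1)) ∧ (0 < y (i + 1) ∧ y (i + 1) < m) := by
      intro i ⟨hpos, hlt⟩
      have hcy : Real.sqrt ((y i) ^ 2 + k) < L / 2 := by
        have h1 : (y i) ^ 2 < m ^ 2 := by nlinarith
        calc Real.sqrt ((y i) ^ 2 + k) < Real.sqrt (m ^ 2 + k) :=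
              Real.sqrt_lt_sqrt (by positivity) (by linarith)
          _ = L / 2 := hcm
      have hr := hrec i
      have hlt' : y i < y (i + 1) := by
        have hF : (y i) + Real.sqrt ((y i) ^ 2 + k) <
            (y (i+1)) + Real.sqrt ((y (i+1)) ^ 2 + k) := by linarith
        exact (Fmono k hk).lt_iff_lt.1 hF
      have hbd := (key (y i) hpos hlt).2 (y (i+1)) hlt' hr
      exact ⟨hlt', lt_trans hpos hlt', hbd⟩
    have inv : ∀ i, 0 < y i ∧ y i < m := by
      intro i
      induction i with
      | zero => exact ⟨h0, h1⟩
      | succ n ih => exact (step n ih).2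
    refine ⟨strictMono_nat_of_lt_succ (fun n => (step n (inv n)).1), fun i => (inv i).2⟩
end

section
/- Let L > 0 and define c(u) = √(u² + (L/3)²). Suppose 0 < y < y' satisfy y' − y + c(y) + c(y') = L. Then for all reals p, q with 0 ≤ p ≤ y and q ≥ y', the tour length c(p) + (q − p) + c(q) is at least L, with equality if and only if p = y and q = y'. In particular, no tour of length strictly less than L can simultaneously reach a point p ≤ y and a point q ≥ y'. -/
/-- For `0 ≤ a < b` and `k > 0`, the function `u ↦ √(u² + k) − u` is strictly
decreasing. -/
lemma sqrt_sub_strict_anti (k a b : ℝ) (hk : 0 < k) (ha : 0 ≤ a) (hab : a < b) :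
    Real.sqrt (b ^ 2 + k) - b < Real.sqrt (a ^ 2 + k) - a := by
  have hsa : a < Real.sqrt (a ^ 2 + k) := by
    have : a ^ 2 < a ^ 2 + k := by linarith
    exact (Real.lt_sqrt ha).mpr this
  have hsq : Real.sqrt (a ^ 2 + k) ^ 2 = a ^ 2 + k :=
    Real.sq_sqrt (by positivity)
  have hpos : 0 < (b - a) + Real.sqrt (a ^ 2 + k) := by
    have := Real.sqrt_nonneg (a ^ 2 + k); linarith
  have : Real.sqrt (b ^ 2 + k) < (b - a) + Real.sqrt (a ^ 2 + k) := by
    rw [show ((b - a) + Real.sqrt (a ^ 2 + k)) = Real.sqrt (((b - a) + Real.sqrt (a ^ 2 + k)) ^ 2) from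
      (Real.sqrt_sq hpos.le).symm]
    apply Real.sqrt_lt_sqrt (by positivity)
    nlinarith [hsa, hsq, hab]
  linarith

/-- If `0 < y < y'` satisfy `y' − y + c(y) + c(y') = L`, then for all
`0 ≤ p ≤ y` and `q ≥ y'`, the tour length `c(p) + (q − p) + c(q)` is at least `L`,
with equality iff `p = y` and `q = y'`. -/
theorem stmt_8 (L y y' : ℝ) (hL : 0 < L) (hy : 0 < y) (hyy' : y < y')
    (heq : y' - y + Real.sqrt (y ^ 2 + (L / 3) ^ 2)
        + Real.sqrt (y' ^ 2 + (L / 3) ^ 2) = L)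
    (p q : ℝ) (hp0 : 0 ≤ p) (hpy : p ≤ y) (hq : y' ≤ q) :
    L ≤ Real.sqrt (p ^ 2 + (L / 3) ^ 2) + (q - p) + Real.sqrt (q ^ 2 + (L / 3) ^ 2) ∧
    (Real.sqrt (p ^ 2 + (L / 3) ^ 2) + (q - p) + Real.sqrt (q ^ 2 + (L / 3) ^ 2) = L ↔
      p = y ∧ q = y') := by
  have hk : 0 < (L / 3) ^ 2 := by positivity
  -- p-side: c(p) - p ≥ c(y) - y, strict if p < y
  have hpside : Real.sqrt (y ^ 2 + (L / 3) ^ 2) - y ≤ Real.sqrt (p ^ 2 + (L / 3) ^ 2) - p := by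
    rcases eq_or_lt_of_le hpy with h | h
    · rw [h]
    · exact (sqrt_sub_strict_anti _ p y hk hp0 h).le
  -- q-side: c(q) + q ≥ c(y') + y', strict if y' < q
  have hqside : Real.sqrt (y' ^ 2 + (L / 3) ^ 2) + y' ≤ Real.sqrt (q ^ 2 + (L / 3) ^ 2) + q := by
    rcases eq_or_lt_of_le hq with h | h
    · rw [h]
    · have hy'0 : (0:ℝ) ≤ y' := by linarith
      have := Real.sqrt_le_sqrt (show y' ^ 2 + (L/3)^2 ≤ q ^ 2 + (L/3)^2 by nlinarith)
      linarith
  have hge : L ≤ Real.sqrt (p ^ 2 + (L / 3) ^ 2) + (q - p) + Real.sqrt (q ^ 2 + (L / 3) ^ 2) := by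
    linarith
  refine ⟨hge, ?_, ?_⟩
  · intro hEq
    constructor
    · by_contra hne
      have h : p < y := lt_of_le_of_ne hpy hne
      have := sqrt_sub_strict_anti _ p y hk hp0 h
      linarith
    · by_contra hne
      have h : y' < q := lt_of_le_of_ne hq (Ne.symm hne)
      have hy'0 : (0:ℝ) ≤ y' := by linarith
      have hs := Real.sqrt_lt_sqrt (by positivity)
        (show y' ^ 2 + (L/3)^2 < q ^ 2 + (L/3)^2 by nlinarith)
      linarith
  · rintro ⟨rfl, rfl⟩
    linarith
end

section
/- Let k ≥ 2 be a natural number, L > 0, and let ℓ : Fin k → ℝ be nonnegative loads with minimum t₁ = min_i ℓ_i and maximum t_k = max_i ℓ_i, and suppose t_k > t₁. Let t* > 0 be a real with k·t* ≥ Σ_i ℓ_i. Then, setting Γ = k·t₁/(t_k − t₁), one has t_k ≤ ((Γ + k)/(Γ + 1)) · t*. -/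
/-- For `k ≥ 2` drones with nonnegative loads `ℓ`, minimum load `t₁`,
maximum load `tk > t₁`, and an optimal makespan `t* > 0` with `k·t* ≥ Σ ℓ`, one has
`tk ≤ ((Γ + k)/(Γ + 1))·t*` where `Γ = k·t₁/(tk − t₁)`. -/
theorem stmt_16 (k : ℕ) (hk : 2 ≤ k) (L : ℝ) (hL : 0 < L) (ℓ : Fin k → ℝ)
    (hnn : ∀ i, 0 ≤ ℓ i) (t₁ tk : ℝ)
    (ht₁ : IsLeast (Set.range ℓ) t₁) (htk : IsGreatest (Set.range ℓ) tk)
    (hlt : t₁ < tk) (tstar : ℝ) (hts : 0 < tstar)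
    (hsum : ∑ i, ℓ i ≤ k * tstar) :
    tk ≤ ((k * t₁ / (tk - t₁) + k) / (k * t₁ / (tk - t₁) + 1)) * tstar := by
  obtain ⟨j, hj⟩ := htk.1
  obtain ⟨i0, hi0⟩ := ht₁.1
  have ht₁0 : 0 ≤ t₁ := hi0 ▸ hnn i0
  have htk0 : 0 < tk := lt_of_le_of_lt ht₁0 hlt
  have hd : 0 < tk - t₁ := sub_pos.mpr hlt
  have hkpos : (0:ℝ) < k := by positivity
  -- sum lower bound
  have hbound : tk + ((k:ℝ) - 1) * t₁ ≤ ∑ i, ℓ i := by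
    have hsplit := Finset.add_sum_erase Finset.univ ℓ (Finset.mem_univ j)
    rw [← hsplit, hj]
    have hle : ∀ i ∈ Finset.univ.erase j, t₁ ≤ ℓ i := fun i _ => ht₁.2 ⟨i, rfl⟩
    have hcard : (Finset.univ.erase j).card = k - 1 := by
      rw [Finset.card_erase_of_mem (Finset.mem_univ j)]
      simp
    have h2 := Finset.card_nsmul_le_sum (Finset.univ.erase j) ℓ t₁ hle
    rw [hcard, nsmul_eq_mul] at h2
    have hcast : ((k - 1 : ℕ) : ℝ) = (k:ℝ) - 1 := by
      have : 1 ≤ k := le_trans (by norm_num) hk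
      push_cast [this]
      ring
    rw [hcast] at h2
    linarith
  have hkt : tk + ((k:ℝ) - 1) * t₁ ≤ k * tstar := le_trans hbound hsum
  have hΓ0 : 0 ≤ (k:ℝ) * t₁ / (tk - t₁) := by positivity
  have hden : 0 < (k:ℝ) * t₁ / (tk - t₁) + 1 := by linarith
  rw [div_mul_eq_mul_div, le_div_iff₀ hden]
  have hΓ : ((k:ℝ) * t₁ / (tk - t₁)) * (tk - t₁) = (k:ℝ) * t₁ :=
    div_mul_cancel₀ _ (ne_of_gt hd)
  nlinarith [mul_pos htk0 hd, mul_le_mul_of_nonneg_left hkt (le_of_lt htk0),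
    mul_nonneg hΓ0 (le_of_lt hts), mul_le_mul_of_nonneg_left hkt hΓ0]
end
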